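/- Under the standing setup, if D(A_2) = D(A) + α_1·D(A_{1,2}), then |A_{H_1∩H_2}| > 2; that is, there exists a hyperplane H ∈ A distinct from H_1 and H_2 whose defining form lies in the K-linear span of α_1 and α_2. -/

import Mathlib

/-!
Choose a constant derivation `∂` with `∂ α₁ = 0` and `∂ α₂ = 1`, and let `Q` be the product of
the forms of `A₁₂`. Then `Q ∂ ∈ D(A₂)`, so by hypothesis `Q ∂ = η + α₁ τ` with `η ∈ D(A)`;
evaluating at `α₂` gives `Q ∈ (α₁, α₂)`. An ideal generated by linear forms is prime, so some
factor of `Q` lies in `span K {α₁, α₂}`: a third hyperplane through `H₁ ∩ H₂`.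
-/

set_option maxHeartbeats 1000000
set_option synthInstance.maxHeartbeats 1000000

universe u

namespace ArrPaper

/-- The polynomial ring `S = K[x_1, …, x_ℓ]`. -/
abbrev S (K : Type u) [Field K] (ℓ : ℕ) : Type u := MvPolynomial (Fin ℓ) K

/-- Derivations of `S`, identified with their coefficient vectors:
`θ = Σ f_i ∂_{x_i}` corresponds to `(f_1, …, f_ℓ)`. -/
abbrev Der (K : Type u) [Field K] (ℓ : ℕ) : Type u := Fin ℓ → MvPolynomial (Fin ℓ) K

variable {K : Type u} [Field K] {ℓ : ℕ}

/-- Application of the derivation `θ = Σ θ_i ∂_{x_i}` to a polynomial, as a linear map in `θ`. -/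
noncomputable def derAppLin (α : S K ℓ) : Der K ℓ →ₗ[S K ℓ] S K ℓ where
  toFun θ := ∑ i, θ i * MvPolynomial.pderiv i α
  map_add' a b := by simp [add_mul, Finset.sum_add_distrib]
  map_smul' c a := by simp [Finset.mul_sum, smul_eq_mul, mul_assoc]

/-- The logarithmic derivation module `D(A)` of a (multi)set of defining forms. -/
noncomputable def logDeriv (A : Finset (S K ℓ)) : Submodule (S K ℓ) (Der K ℓ) :=
  ⨅ α ∈ A, Submodule.comap (derAppLin α) (Ideal.span {α})

/-- A derivation is homogeneous of degree `d` if all its coefficients are. -/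
def IsHomDer (θ : Der K ℓ) (d : ℕ) : Prop := ∀ i, (θ i).IsHomogeneous d

/-- A central arrangement: a finite set of nonzero degree-one forms, pairwise
non-proportional (so that they define distinct hyperplanes). -/
def IsArrangement (A : Finset (S K ℓ)) : Prop :=
  (∀ α ∈ A, α ≠ 0 ∧ α.IsHomogeneous 1) ∧
    ∀ α ∈ A, ∀ β ∈ A, α ≠ β → ∀ c : K, α ≠ c • β

/-- `θ` is a homogeneous basis of the submodule `M ⊆ Der`, of degrees `d`. -/
def IsHomBasis {n : ℕ} (θ : Fin n → Der K ℓ) (d : Fin n → ℕ)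
    (M : Submodule (S K ℓ) (Der K ℓ)) : Prop :=
  (∀ i, IsHomDer (θ i) (d i)) ∧ LinearIndependent (S K ℓ) θ ∧
    Submodule.span (S K ℓ) (Set.range θ) = M

/-- The arrangement `A` is free with exponents `d`. -/
def IsFreeExp (A : Finset (S K ℓ)) (d : Fin ℓ → ℕ) : Prop :=
  ∃ θ : Fin ℓ → Der K ℓ, IsHomBasis θ d (logDeriv A)

/-- `T` is a minimal generating set of `M`: it generates, and no proper subset does. -/
def IsMinGenSet (T : Set (Der K ℓ)) (M : Submodule (S K ℓ) (Der K ℓ)) : Prop :=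
  Submodule.span (S K ℓ) T = M ∧ ∀ T' ⊂ T, Submodule.span (S K ℓ) T' ≠ M

/-- `B` is strictly plus-one generated (SPOG) with exponents `d` and level `c`. -/
def IsSPOG (B : Finset (S K ℓ)) (d : Fin ℓ → ℕ) (c : ℕ) : Prop :=
  ∃ (θ : Fin ℓ → Der K ℓ) (φ : Der K ℓ) (f : Fin ℓ → S K ℓ) (α : S K ℓ),
    (∀ i, IsHomDer (θ i) (d i)) ∧ IsHomDer φ c ∧
    IsMinGenSet (Set.range θ ∪ {φ}) (logDeriv B) ∧
    α ≠ 0 ∧ α.IsHomogeneous 1 ∧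
    (∑ i, f i • θ i) + α • φ = 0 ∧
    (∀ (g : Fin ℓ → S K ℓ) (g₀ : S K ℓ), (∑ i, g i • θ i) + g₀ • φ = 0 →
      ∃ s : S K ℓ, (∀ i, g i = s * f i) ∧ g₀ = s * α)

/-- `ψ` is a level element for the deletion `B = A ∖ {H}` (of degree `c`):
`ψ ∈ D(B) ∖ D(A)` is homogeneous of degree `c` and `D(B) = D(A) + S·ψ`. -/
def IsLevelElt (A B : Finset (S K ℓ)) (c : ℕ) (ψ : Der K ℓ) : Prop :=
  ψ ∈ logDeriv B ∧ ψ ∉ logDeriv A ∧ IsHomDer ψ c ∧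
    logDeriv B = logDeriv A ⊔ Submodule.span (S K ℓ) {ψ}

/-- `α·M = {α·θ : θ ∈ M}` for a polynomial `α` and a submodule `M` of `Der`. -/
noncomputable def smulSub (α : S K ℓ) (M : Submodule (S K ℓ) (Der K ℓ)) :
    Submodule (S K ℓ) (Der K ℓ) :=
  Submodule.map (LinearMap.lsmul (S K ℓ) (Der K ℓ) α) M

/-- The number `|A_{H₁ ∩ H₂}|` of hyperplanes of `A` whose defining form lies in the
`K`-linear span of `α₁` and `α₂`. -/
noncomputable def interCount (A : Finset (S K ℓ)) (α₁ α₂ : S K ℓ) : ℕ :=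
  {β ∈ (A : Set (S K ℓ)) | β ∈ Submodule.span K {α₁, α₂}}.ncard

/-- `D(B)` can be generated by at most `n` homogeneous derivations. -/
def HomGenBound (B : Finset (S K ℓ)) (n : ℕ) : Prop :=
  ∃ T : Finset (Der K ℓ), T.card ≤ n ∧ (∀ θ ∈ T, ∃ e, IsHomDer θ e) ∧
    Submodule.span (S K ℓ) (T : Set (Der K ℓ)) = logDeriv B

/-- `|DS(B)| = n`: `D(B)` has a minimal homogeneous generating set of cardinality `n`. -/
def DSCard (B : Finset (S K ℓ)) (n : ℕ) : Prop :=
  ∃ T : Finset (Der K ℓ), T.card = n ∧ (∀ θ ∈ T, ∃ e, IsHomDer θ e) ∧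
    IsMinGenSet (T : Set (Der K ℓ)) (logDeriv B)

/-- `pdLE R n M` : the projective dimension of the `R`-module `M` is at most `n`,
expressed via projectivity of the `n`-th syzygy in the canonical free resolution. -/
def pdLE (R : Type u) [CommRing R] : ℕ → (M : Type u) → [AddCommGroup M] → [Module R M] → Prop
  | 0, M, _, _ => Module.Projective R M
  | n + 1, M, _, _ =>
      pdLE R n ↥(LinearMap.ker (Finsupp.linearCombination R (_root_.id : M → M)))


end ArrPaper

namespace MvPolynomial

variable {σ R : Type*} [CommSemiring R]

theorem IsHomogeneous.mem_span_range_X {β : MvPolynomial σ R} (hβ : β.IsHomogeneous 1) :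
    β ∈ Submodule.span R (Set.range X) :=
  homogeneousSubmodule_one_eq_span_X (σ := σ) (R := R) ▸ hβ

theorem IsHomogeneous.aeval_X_eq_linearMap {B : Type*} [CommSemiring B] [Algebra R B]
    (T : MvPolynomial σ R →ₗ[R] B) {β : MvPolynomial σ R} (hβ : β.IsHomogeneous 1) :
    MvPolynomial.aeval (fun i => T (X i)) β = T β :=
  LinearMap.eqOn_span (f := (MvPolynomial.aeval fun i => T (X i)).toLinearMap) (g := T)
    (by rintro _ ⟨i, rfl⟩; simp) hβ.mem_span_range_X

theorem exists_mem_span_of_prod_mem_ideal_span {K : Type*} [Field K]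
    {s : Set (MvPolynomial σ K)} (hs : ∀ α ∈ s, α.IsHomogeneous 1)
    {ι : Type*} (L : Finset ι) (β : ι → MvPolynomial σ K) (hβ : ∀ i ∈ L, (β i).IsHomogeneous 1)
    (h : ∏ i ∈ L, β i ∈ Ideal.span s) :
    ∃ i ∈ L, β i ∈ Submodule.span K s := by
  -- Substitute for the variables their images under a projection `T` with kernel `span K s`.
  obtain ⟨w, hw⟩ := (Submodule.span K s).exists_isCompl
  set T := w.subtype ∘ₗ Submodule.projectionOnto w _ hw.symm
  have hT : ∀ x, T x = 0 ↔ x ∈ Submodule.span K s := fun x => by simp [T]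
  have hspan : Ideal.span s ≤ RingHom.ker (aeval fun i => T (X i)) :=
    Ideal.span_le.2 fun α hα => by
      rw [SetLike.mem_coe, RingHom.mem_ker, (hs α hα).aeval_X_eq_linearMap, hT]
      exact Submodule.subset_span hα
  have hprod := hspan h
  rw [RingHom.mem_ker, map_prod, Finset.prod_eq_zero_iff] at hprod
  obtain ⟨i, hi, hTi⟩ := hprod
  exact ⟨i, hi, (hT _).1 ((hβ i hi).aeval_X_eq_linearMap T ▸ hTi)⟩

end MvPolynomial

theorem Module.exists_dual_eq_zero_eq_one {K V : Type*} [Field K] [AddCommGroup V] [Module K V]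
    {x y : V} (h : y ∉ K ∙ x) : ∃ f : Module.Dual K V, f x = 0 ∧ f y = 1 := by
  obtain ⟨f, hfy, hfx⟩ := Submodule.exists_dual_map_eq_bot_of_notMem h inferInstance
  have hfx : f x = 0 := by
    simpa [hfx] using Submodule.mem_map_of_mem (f := f) (Submodule.mem_span_singleton_self x)
  exact ⟨(f y)⁻¹ • f, by simp [hfx], by simp [hfy]⟩

namespace ArrPaper

open MvPolynomial

variable {K : Type u} [Field K] {ℓ : ℕ}

theorem derAppLin_apply (α : S K ℓ) (θ : Der K ℓ) :
    derAppLin α θ = ∑ i, θ i * pderiv i α :=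
  rfl

theorem mem_logDeriv {A : Finset (S K ℓ)} {θ : Der K ℓ} :
    θ ∈ logDeriv A ↔ ∀ β ∈ A, derAppLin β θ ∈ Ideal.span {β} := by
  simp [logDeriv, Submodule.mem_iInf]

theorem derAppLin_const_of_isHomogeneous_one (f : S K ℓ →ₗ[K] K) {β : S K ℓ}
    (hβ : β.IsHomogeneous 1) : derAppLin β (fun i => C (f (X i))) = C (f β) := by
  have hβX := hβ.mem_span_range_X
  clear hβ
  induction hβX using Submodule.span_induction with
  | mem x hx =>
    obtain ⟨j, rfl⟩ := hx
    simp [derAppLin_apply, pderiv_X, Pi.single_apply]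
  | zero => simp [derAppLin_apply]
  | add x y _ _ hx hy =>
    simp only [derAppLin_apply] at hx hy ⊢
    simp [mul_add, Finset.sum_add_distrib, hx, hy]
  | smul a x _ hx =>
    simp only [derAppLin_apply] at hx ⊢
    rw [map_smul f, smul_eq_mul, map_mul, ← hx, Finset.mul_sum]
    simp [smul_eq_C_mul, mul_left_comm]

theorem IsArrangement.isHomogeneous_one {A : Finset (S K ℓ)} (hA : IsArrangement A)
    {α : S K ℓ} (hα : α ∈ A) : α.IsHomogeneous 1 :=
  (hA.1 α hα).2

theorem IsArrangement.notMem_span_singleton {A : Finset (S K ℓ)} (hA : IsArrangement A)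
    {α β : S K ℓ} (hα : α ∈ A) (hβ : β ∈ A) (hne : α ≠ β) : β ∉ K ∙ α := by
  rintro hβα
  obtain ⟨c, rfl⟩ := Submodule.mem_span_singleton.1 hβα
  exact hA.2 _ hβ _ hα hne.symm c rfl

theorem prod_erase_smul_mem_logDeriv [DecidableEq (S K ℓ)] {B : Finset (S K ℓ)} {α : S K ℓ}
    {θ : Der K ℓ} (hθ : derAppLin α θ = 0) : (∏ β ∈ B.erase α, β) • θ ∈ logDeriv B := by
  refine mem_logDeriv.2 fun β hβ => ?_
  rw [map_smul, smul_eq_mul]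
  rcases eq_or_ne β α with rfl | hβα
  · simp [hθ]
  · exact Ideal.mem_span_singleton.2
      (dvd_mul_of_dvd_left (Finset.dvd_prod_of_mem _ (Finset.mem_erase.2 ⟨hβα, hβ⟩)) _)

theorem derAppLin_mem_span_pair_of_mem_sup {A : Finset (S K ℓ)} {α₁ α₂ : S K ℓ} (h₂ : α₂ ∈ A)
    {M : Submodule (S K ℓ) (Der K ℓ)} {θ : Der K ℓ}
    (hθ : θ ∈ logDeriv A ⊔ smulSub α₁ M) : derAppLin α₂ θ ∈ Ideal.span {α₁, α₂} := by
  obtain ⟨η, hη, _, ⟨τ, -, rfl⟩, rfl⟩ := Submodule.mem_sup.1 hθ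
  rw [LinearMap.lsmul_apply, map_add, map_smul, smul_eq_mul]
  exact Ideal.add_mem _ (Ideal.span_mono (by simp) (mem_logDeriv.1 hη α₂ h₂))
    (Ideal.mul_mem_right _ _ (Ideal.subset_span (by simp)))

theorem prod_erase_erase_mem_ideal_span_pair [DecidableEq (S K ℓ)] {A : Finset (S K ℓ)}
    (hA : IsArrangement A) {α₁ α₂ : S K ℓ} (h₁ : α₁ ∈ A) (h₂ : α₂ ∈ A) (hne : α₁ ≠ α₂)
    (heq : logDeriv (A.erase α₂) =
      logDeriv A ⊔ smulSub α₁ (logDeriv ((A.erase α₁).erase α₂))) :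
    ∏ β ∈ (A.erase α₁).erase α₂, β ∈ Ideal.span {α₁, α₂} := by
  obtain ⟨f, hf₁, hf₂⟩ :=
    Module.exists_dual_eq_zero_eq_one (hA.notMem_span_singleton h₁ h₂ hne)
  have hθ := prod_erase_smul_mem_logDeriv (B := A.erase α₂) (θ := fun i => C (f (X i)))
    (by rw [derAppLin_const_of_isHomogeneous_one f (hA.isHomogeneous_one h₁), hf₁, map_zero])
  rw [Finset.erase_right_comm, heq] at hθ
  simpa [derAppLin_const_of_isHomogeneous_one f (hA.isHomogeneous_one h₂), hf₂] using
    derAppLin_mem_span_pair_of_mem_sup h₂ hθ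

theorem two_lt_interCount {A : Finset (S K ℓ)} {α₁ α₂ β : S K ℓ} (h₁ : α₁ ∈ A) (h₂ : α₂ ∈ A)
    (hne : α₁ ≠ α₂) (hβ : β ∈ A) (hβ₁ : β ≠ α₁) (hβ₂ : β ≠ α₂)
    (hβspan : β ∈ Submodule.span K {α₁, α₂}) : 2 < interCount A α₁ α₂ := by
  have hsub : ({α₁, α₂, β} : Set (S K ℓ)) ⊆
      {γ ∈ (A : Set (S K ℓ)) | γ ∈ Submodule.span K {α₁, α₂}} := by
    rintro γ (rfl | rfl | rfl)
    · exact ⟨h₁, Submodule.subset_span (by simp)⟩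
    · exact ⟨h₂, Submodule.subset_span (by simp)⟩
    · exact ⟨hβ, hβspan⟩
  calc 2 < ({α₁, α₂, β} : Set (S K ℓ)).ncard :=
        (Set.ncard_eq_three.2 ⟨_, _, _, hne, hβ₁.symm, hβ₂.symm, rfl⟩).symm ▸ by norm_num
    _ ≤ interCount A α₁ α₂ := Set.ncard_le_ncard hsub (A.finite_toSet.subset (Set.sep_subset _ _))

theorem stmt6_general {K : Type u} [Field K] {ℓ : ℕ} [DecidableEq (S K ℓ)]
    (A : Finset (S K ℓ)) (hA : IsArrangement A)
    (α₁ α₂ : S K ℓ) (h₁ : α₁ ∈ A) (h₂ : α₂ ∈ A) (hne : α₁ ≠ α₂)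
    (heq : logDeriv (A.erase α₂) =
      logDeriv A ⊔ smulSub α₁ (logDeriv ((A.erase α₁).erase α₂))) :
    2 < interCount A α₁ α₂ ∧
      ∃ β ∈ A, β ≠ α₁ ∧ β ≠ α₂ ∧ β ∈ Submodule.span K {α₁, α₂} := by
  obtain ⟨β, hβ, hβspan⟩ := exists_mem_span_of_prod_mem_ideal_span
    (by simpa using ⟨hA.isHomogeneous_one h₁, hA.isHomogeneous_one h₂⟩) _ id
    (fun β hβ => hA.isHomogeneous_one (Finset.mem_of_mem_erase (Finset.mem_of_mem_erase hβ)))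
    (prod_erase_erase_mem_ideal_span_pair hA h₁ h₂ hne heq)
  obtain ⟨hβ₂, hβ₁, hβA⟩ : β ≠ α₂ ∧ β ≠ α₁ ∧ β ∈ A := by simpa using hβ
  exact ⟨two_lt_interCount h₁ h₂ hne hβA hβ₁ hβ₂ hβspan, β, hβA, hβ₁, hβ₂, hβspan⟩

/-- If `D(A₂) = D(A) + α₁·D(A₁₂)`, then `|A_{H₁∩H₂}| > 2`; i.e. some hyperplane
of `A` distinct from `H₁, H₂` has defining form in the `K`-span of `α₁, α₂`. -/
theorem stmt6 {K : Type u} [Field K] {ℓ : ℕ} [DecidableEq (S K ℓ)] (hℓ : 0 < ℓ)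
    (A : Finset (S K ℓ)) (hA : IsArrangement A)
    (α₁ α₂ : S K ℓ) (h₁ : α₁ ∈ A) (h₂ : α₂ ∈ A) (hne : α₁ ≠ α₂)
    (d : Fin ℓ → ℕ) (hd1 : d ⟨0, hℓ⟩ = 1) (hfree : IsFreeExp A d)
    (c₁ c₂ : ℕ) (hc : c₁ ≤ c₂)
    (hS1 : IsSPOG (A.erase α₁) d c₁) (hS2 : IsSPOG (A.erase α₂) d c₂)
    (heq : logDeriv (A.erase α₂) =
      logDeriv A ⊔ smulSub α₁ (logDeriv ((A.erase α₁).erase α₂))) :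
    2 < interCount A α₁ α₂ ∧
      ∃ β ∈ A, β ≠ α₁ ∧ β ≠ α₂ ∧ β ∈ Submodule.span K {α₁, α₂} :=
  stmt6_general A hA α₁ α₂ h₁ h₂ hne heq

end ArrPaper
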